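/- For every $F \in C^{2,2}([0,1]^2)$ and $(x,y) \in [0,1]^2$: $|F(x,y) - ({}_xB_{n_1} \circ {}_yB_{n_2})(F;x,y)| \le \frac{3}{2}\left[\|F^{(2,0)}\|_\infty \frac{x(1-x)}{n_1} + \|F^{(0,2)}\|_\infty \frac{y(1-y)}{n_2}\right]$. -/

import Mathlib

/-!
The univariate Bernstein operator `B_n` is positive, reproduces affine functions and has second
central moment `B_n((t - x)²)(x) = x(1 - x)/n`. Hence a second-order Taylor bound
`|g t - g x - g' x (t - x)| ≤ ‖g''‖ (t - x)²` gives `|g x - B_n g x| ≤ ‖g''‖ x(1 - x)/n`.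
For the tensor product split `F - B₁B₂F = (F - B₁F) + B₁(F - B₂F)`: the first term is the
univariate estimate in `x`, and since `B₁` is positive with `B₁ 1 = 1` the second is bounded by
the sup over the nodes of the univariate estimate in `y`. This gives the bound with constant
`1 ≤ 3/2`.
-/

open Finset Set

/-- Tensor product of two classical Bernstein operators on `[0,1]`. -/
noncomputable def bernsteinTensor (n₁ n₂ : ℕ) (F : ℝ → ℝ → ℝ) (x y : ℝ) : ℝ :=
  ∑ i ∈ Finset.range (n₁ + 1), ∑ j ∈ Finset.range (n₂ + 1),
    F ((i : ℝ) / n₁) ((j : ℝ) / n₂) *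
      ((n₁.choose i : ℝ) * x ^ i * (1 - x) ^ (n₁ - i)) *
      ((n₂.choose j : ℝ) * y ^ j * (1 - y) ^ (n₂ - j))

noncomputable def bernsteinApprox (n : ℕ) (g : ℝ → ℝ) (x : ℝ) : ℝ :=
  ∑ i ∈ range (n + 1), g (i / n) * (bernsteinPolynomial ℝ n i).eval x

lemma bernsteinPolynomial_eval_real (n ν : ℕ) (x : ℝ) :
    (bernsteinPolynomial ℝ n ν).eval x = n.choose ν * x ^ ν * (1 - x) ^ (n - ν) := by
  simp [bernsteinPolynomial]

lemma bernsteinPolynomial_eval_nonneg (n ν : ℕ) {x : ℝ} (hx : x ∈ Icc (0 : ℝ) 1) :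
    0 ≤ (bernsteinPolynomial ℝ n ν).eval x := by
  rw [bernsteinPolynomial_eval_real]
  have hx₀ : 0 ≤ x := hx.1
  have hx₁ : 0 ≤ 1 - x := sub_nonneg.2 hx.2
  positivity

lemma natCast_div_mem_Icc {i n : ℕ} (h : i ≤ n) : (i / n : ℝ) ∈ Icc (0 : ℝ) 1 :=
  ⟨by positivity, div_le_one_of_le₀ (by exact_mod_cast h) n.cast_nonneg⟩

lemma sum_bernsteinPolynomial_eval (n : ℕ) (x : ℝ) :
    ∑ i ∈ range (n + 1), (bernsteinPolynomial ℝ n i).eval x = 1 := by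
  simpa [Polynomial.eval_finsetSum] using congrArg (Polynomial.eval x) (bernsteinPolynomial.sum ℝ n)

lemma sum_mul_bernsteinPolynomial_eval (n : ℕ) (x : ℝ) :
    ∑ i ∈ range (n + 1), (i : ℝ) * (bernsteinPolynomial ℝ n i).eval x = n * x := by
  simpa [Polynomial.eval_finsetSum] using
    congrArg (Polynomial.eval x) (bernsteinPolynomial.sum_smul ℝ n)

lemma sum_sq_mul_bernsteinPolynomial_eval (n : ℕ) (x : ℝ) :
    ∑ i ∈ range (n + 1), ((n : ℝ) * x - i) ^ 2 * (bernsteinPolynomial ℝ n i).eval x =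
      n * x * (1 - x) := by
  simpa [Polynomial.eval_finsetSum] using
    congrArg (Polynomial.eval x) (bernsteinPolynomial.variance ℝ n)

section bernsteinApprox

variable {n : ℕ} {f g : ℝ → ℝ} {x : ℝ}

lemma bernsteinApprox_const (n : ℕ) (a x : ℝ) : bernsteinApprox n (fun _ => a) x = a := by
  rw [bernsteinApprox, ← mul_sum, sum_bernsteinPolynomial_eval, mul_one]

lemma bernsteinApprox_id (hn : n ≠ 0) (x : ℝ) : bernsteinApprox n (fun t => t) x = x := by
  have := sum_mul_bernsteinPolynomial_eval n x
  simp only [bernsteinApprox, div_mul_eq_mul_div, ← sum_div, this]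
  field_simp

lemma bernsteinApprox_sq_sub (hn : n ≠ 0) (x : ℝ) :
    bernsteinApprox n (fun t => (t - x) ^ 2) x = x * (1 - x) / n := by
  have hn' : (n : ℝ) ≠ 0 := by exact_mod_cast hn
  have key : ∀ i : ℕ, ((i : ℝ) / n - x) ^ 2 = ((n : ℝ) * x - i) ^ 2 / n ^ 2 := fun i => by
    field_simp; ring
  simp only [bernsteinApprox, key, div_mul_eq_mul_div, ← sum_div,
    sum_sq_mul_bernsteinPolynomial_eval]
  field_simp

lemma bernsteinApprox_sub (n : ℕ) (f g : ℝ → ℝ) (x : ℝ) :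
    bernsteinApprox n (fun t => f t - g t) x = bernsteinApprox n f x - bernsteinApprox n g x := by
  simp only [bernsteinApprox, sub_mul, sum_sub_distrib]

lemma bernsteinApprox_const_mul (n : ℕ) (c : ℝ) (f : ℝ → ℝ) (x : ℝ) :
    bernsteinApprox n (fun t => c * f t) x = c * bernsteinApprox n f x := by
  simp only [bernsteinApprox, mul_sum, mul_assoc]

lemma bernsteinApprox_mono (hx : x ∈ Icc (0 : ℝ) 1) (h : ∀ t ∈ Icc (0 : ℝ) 1, f t ≤ g t) :
    bernsteinApprox n f x ≤ bernsteinApprox n g x :=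
  sum_le_sum fun i hi => mul_le_mul_of_nonneg_right
    (h _ (natCast_div_mem_Icc (Nat.lt_succ_iff.1 (mem_range.1 hi))))
    (bernsteinPolynomial_eval_nonneg n i hx)

lemma bernsteinApprox_neg (n : ℕ) (f : ℝ → ℝ) (x : ℝ) :
    bernsteinApprox n (fun t => -f t) x = -bernsteinApprox n f x := by
  simp only [bernsteinApprox, neg_mul, sum_neg_distrib]

lemma abs_bernsteinApprox_le_bernsteinApprox (hx : x ∈ Icc (0 : ℝ) 1)
    (h : ∀ t ∈ Icc (0 : ℝ) 1, |f t| ≤ g t) : |bernsteinApprox n f x| ≤ bernsteinApprox n g x := by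
  refine abs_le.2 ⟨?_, bernsteinApprox_mono hx fun t ht => le_of_abs_le (h t ht)⟩
  rw [← bernsteinApprox_neg]
  exact bernsteinApprox_mono hx fun t ht => neg_le_of_abs_le (h t ht)

lemma abs_bernsteinApprox_le {C : ℝ} (hx : x ∈ Icc (0 : ℝ) 1)
    (h : ∀ t ∈ Icc (0 : ℝ) 1, |f t| ≤ C) : |bernsteinApprox n f x| ≤ C :=
  bernsteinApprox_const n C x ▸ abs_bernsteinApprox_le_bernsteinApprox hx h

lemma abs_sub_bernsteinApprox_le_of_sq_bound (hn : n ≠ 0) {c K : ℝ} (hx : x ∈ Icc (0 : ℝ) 1)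
    (h : ∀ t ∈ Icc (0 : ℝ) 1, |g t - g x - c * (t - x)| ≤ K * (t - x) ^ 2) :
    |g x - bernsteinApprox n g x| ≤ K * (x * (1 - x) / n) := by
  have hlin : bernsteinApprox n (fun t => g t - g x - c * (t - x)) x =
      bernsteinApprox n g x - g x := by
    rw [bernsteinApprox_sub, bernsteinApprox_sub, bernsteinApprox_const, bernsteinApprox_const_mul,
      bernsteinApprox_sub, bernsteinApprox_const, bernsteinApprox_id hn, sub_self, mul_zero,
      sub_zero]
  rw [abs_sub_comm, ← hlin, ← bernsteinApprox_sq_sub hn, ← bernsteinApprox_const_mul]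
  exact abs_bernsteinApprox_le_bernsteinApprox hx h

end bernsteinApprox

lemma abs_sub_sub_mul_le_of_hasDerivWithinAt {s : Set ℝ} (hs : Convex ℝ s) {g g' g'' : ℝ → ℝ}
    {M : ℝ} (hg : ∀ t ∈ s, HasDerivWithinAt g (g' t) s t)
    (hg' : ∀ t ∈ s, HasDerivWithinAt g' (g'' t) s t) (hM : ∀ t ∈ s, |g'' t| ≤ M)
    {x t : ℝ} (hx : x ∈ s) (ht : t ∈ s) :
    |g t - g x - g' x * (t - x)| ≤ M * (t - x) ^ 2 := by
  have hxt : uIcc x t ⊆ s := segment_eq_uIcc x t ▸ hs.segment_subset hx ht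
  have hM0 : 0 ≤ M := (abs_nonneg _).trans (hM x hx)
  have hlip : ∀ u ∈ s, |g' u - g' x| ≤ M * |u - x| := fun u hu =>
    hs.norm_image_sub_le_of_norm_hasDerivWithin_le hg' hM hx hu
  have hderiv : ∀ u ∈ uIcc x t,
      HasDerivWithinAt (fun u => g u - g x - g' x * (u - x)) (g' u - g' x) (uIcc x t) u := by
    intro u hu
    exact ((((hg u (hxt hu)).mono hxt).sub_const (g x)).fun_sub
      ((hasDerivWithinAt_id (s := uIcc x t) (x := u)).sub_const x |>.const_mul (g' x))).congr_deriv
      (by rw [mul_one])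
  have hbound : ∀ u ∈ uIcc x t, ‖g' u - g' x‖ ≤ M * |t - x| := fun u hu =>
    (hlip u (hxt hu)).trans (mul_le_mul_of_nonneg_left (abs_sub_left_of_mem_uIcc hu) hM0)
  have := (convex_uIcc x t).norm_image_sub_le_of_norm_hasDerivWithin_le hderiv hbound
    left_mem_uIcc right_mem_uIcc
  simp only [sub_self, mul_zero, sub_zero, Real.norm_eq_abs] at this
  rwa [mul_assoc, abs_mul_abs_self, ← sq] at this

theorem abs_sub_bernsteinApprox_le {n : ℕ} (hn : n ≠ 0) {g g' g'' : ℝ → ℝ} {M : ℝ}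
    (hg : ∀ t ∈ Icc (0 : ℝ) 1, HasDerivWithinAt g (g' t) (Icc 0 1) t)
    (hg' : ∀ t ∈ Icc (0 : ℝ) 1, HasDerivWithinAt g' (g'' t) (Icc 0 1) t)
    (hM : ∀ t ∈ Icc (0 : ℝ) 1, |g'' t| ≤ M) {x : ℝ} (hx : x ∈ Icc (0 : ℝ) 1) :
    |g x - bernsteinApprox n g x| ≤ M * (x * (1 - x) / n) :=
  abs_sub_bernsteinApprox_le_of_sq_bound hn hx fun _ ht =>
    abs_sub_sub_mul_le_of_hasDerivWithinAt (convex_Icc 0 1) hg hg' hM hx ht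

lemma bernsteinTensor_eq_bernsteinApprox (n₁ n₂ : ℕ) (F : ℝ → ℝ → ℝ) (x y : ℝ) :
    bernsteinTensor n₁ n₂ F x y = bernsteinApprox n₁ (fun s => bernsteinApprox n₂ (F s) y) x := by
  simp only [bernsteinTensor, bernsteinApprox, bernsteinPolynomial_eval_real, sum_mul]
  refine sum_congr rfl fun i _ => sum_congr rfl fun j _ => ?_
  ring

lemma abs_le_iSup_abs_of_continuousOn {α : Type*} [TopologicalSpace α] {K : Set α}
    (hK : IsCompact K) {f : α → ℝ} (hf : ContinuousOn f K) {p : α} (hp : p ∈ K) :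
    |f p| ≤ ⨆ q : K, |f q| := by
  obtain ⟨C, hC⟩ := hK.exists_bound_of_continuousOn hf
  exact le_ciSup (f := fun q : K => |f q|) ⟨C, by rintro _ ⟨q, rfl⟩; exact hC q q.2⟩ ⟨p, hp⟩

/-- for `F ∈ C^{2,2}([0,1]²)`, the tensor-product Bernstein error is bounded by
`(3/2)(‖F^{(2,0)}‖∞ x(1-x)/n₁ + ‖F^{(0,2)}‖∞ y(1-y)/n₂)`. -/
theorem stmt3 (n₁ n₂ : ℕ) (hn₁ : 0 < n₁) (hn₂ : 0 < n₂)
    (F Fx Fxx Fy Fyy : ℝ → ℝ → ℝ)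
    (hFx : ∀ y ∈ Set.Icc (0:ℝ) 1, ∀ x ∈ Set.Icc (0:ℝ) 1,
      HasDerivWithinAt (fun t => F t y) (Fx x y) (Set.Icc (0:ℝ) 1) x)
    (hFxx : ∀ y ∈ Set.Icc (0:ℝ) 1, ∀ x ∈ Set.Icc (0:ℝ) 1,
      HasDerivWithinAt (fun t => Fx t y) (Fxx x y) (Set.Icc (0:ℝ) 1) x)
    (hFy : ∀ x ∈ Set.Icc (0:ℝ) 1, ∀ y ∈ Set.Icc (0:ℝ) 1,
      HasDerivWithinAt (fun t => F x t) (Fy x y) (Set.Icc (0:ℝ) 1) y)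
    (hFyy : ∀ x ∈ Set.Icc (0:ℝ) 1, ∀ y ∈ Set.Icc (0:ℝ) 1,
      HasDerivWithinAt (fun t => Fy x t) (Fyy x y) (Set.Icc (0:ℝ) 1) y)
    (hFxxc : ContinuousOn (fun p : ℝ × ℝ => Fxx p.1 p.2)
      (Set.Icc (0:ℝ) 1 ×ˢ Set.Icc (0:ℝ) 1))
    (hFyyc : ContinuousOn (fun p : ℝ × ℝ => Fyy p.1 p.2)
      (Set.Icc (0:ℝ) 1 ×ˢ Set.Icc (0:ℝ) 1))
    (x y : ℝ) (hx : x ∈ Set.Icc (0:ℝ) 1) (hy : y ∈ Set.Icc (0:ℝ) 1) :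
    |F x y - bernsteinTensor n₁ n₂ F x y| ≤
      (3 / 2) * ((⨆ p : (Set.Icc (0:ℝ) 1 ×ˢ Set.Icc (0:ℝ) 1 : Set (ℝ × ℝ)),
          |Fxx (p : ℝ × ℝ).1 (p : ℝ × ℝ).2|) * (x * (1 - x) / n₁) +
        (⨆ p : (Set.Icc (0:ℝ) 1 ×ˢ Set.Icc (0:ℝ) 1 : Set (ℝ × ℝ)),
          |Fyy (p : ℝ × ℝ).1 (p : ℝ × ℝ).2|) * (y * (1 - y) / n₂)) := by
  have hK : IsCompact (Icc (0 : ℝ) 1 ×ˢ Icc (0 : ℝ) 1) := isCompact_Icc.prod isCompact_Icc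
  have hFxx_le : ∀ s ∈ Icc (0 : ℝ) 1, ∀ u ∈ Icc (0 : ℝ) 1, |Fxx s u| ≤ _ := fun s hs u hu =>
    abs_le_iSup_abs_of_continuousOn hK hFxxc (p := (s, u)) ⟨hs, hu⟩
  have hFyy_le : ∀ s ∈ Icc (0 : ℝ) 1, ∀ u ∈ Icc (0 : ℝ) 1, |Fyy s u| ≤ _ := fun s hs u hu =>
    abs_le_iSup_abs_of_continuousOn hK hFyyc (p := (s, u)) ⟨hs, hu⟩
  have hx_err := abs_sub_bernsteinApprox_le hn₁.ne' (hFx y hy) (hFxx y hy)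
    (fun s hs => hFxx_le s hs y hy) hx
  have hy_err : |bernsteinApprox n₁ (fun s => F s y - bernsteinApprox n₂ (F s) y) x| ≤ _ :=
    abs_bernsteinApprox_le hx fun s hs =>
      abs_sub_bernsteinApprox_le hn₂.ne' (hFy s hs) (hFyy s hs) (hFyy_le s hs) hy
  have hsplit : F x y - bernsteinTensor n₁ n₂ F x y = (F x y - bernsteinApprox n₁ (F · y) x) +
      bernsteinApprox n₁ (fun s => F s y - bernsteinApprox n₂ (F s) y) x := by
    rw [bernsteinTensor_eq_bernsteinApprox, bernsteinApprox_sub]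
    ring
  have hx_nonneg := (abs_nonneg _).trans hx_err
  have hy_nonneg := (abs_nonneg _).trans hy_err
  rw [hsplit]
  linarith [abs_add_le (F x y - bernsteinApprox n₁ (F · y) x)
    (bernsteinApprox n₁ (fun s => F s y - bernsteinApprox n₂ (F s) y) x)]
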